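/- arXiv:1302.0930 — 3 statements merged into one kernel-verified Lean document; each statement's English description precedes it below -/
import Mathlib

section
/- There exists a positive integer N, depending only on A, such that for every affine stable toric variety (B, φ) over A and every χ ∈ Σ̂_A one has φ(A_{Nχ}) = B_{Nχ}; that is, the homogeneous component map φ_{Nχ} : A_{Nχ} → B_{Nχ} is surjective. -/
/-- The canonical embedding `ℤⁿ → ℚⁿ`. -/
def embQ {n : ℕ} (χ : Fin n → ℤ) : Fin n → ℚ := fun i => (χ i : ℚ)

/-- The `ℚ≥0`-cone generated by a subset of `ℚⁿ`. -/
def coneGen {n : ℕ} (S : Set (Fin n → ℚ)) : Set (Fin n → ℚ) :=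
  {x | ∃ (t : Finset (Fin n → ℚ)) (c : (Fin n → ℚ) → ℚ),
    (t : Set (Fin n → ℚ)) ⊆ S ∧ (∀ v ∈ t, 0 ≤ c v) ∧ x = ∑ v ∈ t, c v • v}

/-- The saturation of the weight set of a `ℤⁿ`-graded algebra:
`Σ̂_A = {χ | mχ ∈ Σ_A for some m > 0}`. -/
def satWeightSet {k A : Type} [CommSemiring k] [Semiring A] [Module k A] {n : ℕ}
    (𝒜 : (Fin n → ℤ) → Submodule k A) : Set (Fin n → ℤ) :=
  {χ | ∃ m : ℕ, 0 < m ∧ 𝒜 (m • χ) ≠ ⊥}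

/-- `(B, φ)` is an affine stable toric variety over the graded algebra `(A, 𝒜)`:
`B` is a reduced `ℤⁿ`-graded `k`-algebra with `dim_k B_χ = 1` for `χ ∈ Σ̂_A` and `B_χ = 0`
otherwise, and `φ : A → B` is a graded `k`-algebra homomorphism making `B` a finitely
generated `A`-module. -/
def IsASTV {k : Type} [Field k] {n : ℕ}
    {A : Type} [CommRing A] [Algebra k A] (𝒜 : (Fin n → ℤ) → Submodule k A)
    {B : Type} [CommRing B] [Algebra k B] (ℬ : (Fin n → ℤ) → Submodule k B)
    (φ : A →ₐ[k] B) : Prop :=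
  IsReduced B ∧
  (∀ (χ : Fin n → ℤ) (a : A), a ∈ 𝒜 χ → φ a ∈ ℬ χ) ∧
  (∀ χ ∈ satWeightSet 𝒜, Module.finrank k (ℬ χ) = 1) ∧
  (∀ χ ∉ satWeightSet 𝒜, ℬ χ = ⊥) ∧
  (∃ s : Finset B, ∀ b : B, ∃ c : B → A, b = ∑ x ∈ s, φ (c x) * x)

/-- The orbit cone of a maximal ideal `𝔪 ⊆ A`: the `ℚ≥0`-cone generated by the weights `χ`
for which some `f ∈ A_χ` does not lie in `𝔪`. -/
def orbitCone {k : Type} [Field k] {n : ℕ} {A : Type} [CommRing A] [Algebra k A]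
    (𝒜 : (Fin n → ℤ) → Submodule k A) (𝔪 : Ideal A) : Set (Fin n → ℚ) :=
  coneGen (embQ '' {χ : Fin n → ℤ | ∃ f ∈ 𝒜 χ, f ∉ 𝔪})

/-- The GIT-cone of a character `ψ`: the intersection of all orbit cones containing `ψ`. -/
def GITCone {k : Type} [Field k] {n : ℕ} {A : Type} [CommRing A] [Algebra k A]
    (𝒜 : (Fin n → ℤ) → Submodule k A) (ψ : Fin n → ℤ) : Set (Fin n → ℚ) :=
  ⋂ 𝔪 ∈ {𝔪 : Ideal A | 𝔪.IsMaximal ∧ embQ ψ ∈ orbitCone 𝒜 𝔪}, orbitCone 𝒜 𝔪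

/-!
The weights of the homogeneous elements of `A` lying outside a prime `𝔭` form a monoid, generated
by those weights of the homogeneous components of a fixed finite generating set of `A` that it
contains. For a finite `W ⊆ ℤⁿ` one `N` works for every `χ` having a positive multiple in `ℕW`:
by a conic Carathéodory argument `χ` is a nonnegative rational combination of a linearly
independent part of `W`, and coordinates along a linearly independent family have bounded
denominators on `ℤⁿ`.
Given `(B, φ)` and `0 ≠ b ∈ B_{Nχ}`, choose a prime `P ∌ b` (`B` is reduced). The top-degree
homogeneous part of an integral equation of `b` over `A` produces `a ∈ A_{mNχ}`, `m > 0`, with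
`φ a ∉ P`; so `Nχ` lies in the monoid of `φ⁻¹ P`, which gives `a ∈ A_{Nχ}` with `φ a ≠ 0`, and
`φ a` spans the line `B_{Nχ}`.
-/

open Finset DirectSum

section Caratheodory

variable {K V ι : Type*} [Field K] [LinearOrder K] [IsStrictOrderedRing K]
  [AddCommGroup V] [Module K V] {v : ι → V}

theorem exists_mem_nonneg_sum_erase_eq_of_not_linearIndepOn [DecidableEq ι] {s : Finset ι}
    (hs : ¬LinearIndepOn K v s) {c : ι → K} (hc : ∀ i ∈ s, 0 ≤ c i) :
    ∃ i ∈ s, ∃ c' : ι → K, (∀ j ∈ s.erase i, 0 ≤ c' j) ∧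
      ∑ j ∈ s.erase i, c' j • v j = ∑ j ∈ s, c j • v j := by
  obtain ⟨g, hg, hpos⟩ : ∃ g : ι → K, ∑ i ∈ s, g i • v i = 0 ∧ {i ∈ s | 0 < g i}.Nonempty := by
    obtain ⟨g, hg, i, hi, hgi⟩ := not_linearIndepOn_finset_iff.1 hs
    rcases hgi.lt_or_gt with hneg | hpos
    · exact ⟨-g, by simp [neg_smul, sum_neg_distrib, hg], i, by simpa [hi] using hneg⟩
    · exact ⟨g, hg, i, by simpa [hi] using hpos⟩
  -- move along the relation `g` until the first coefficient `c i` reaches zero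
  obtain ⟨i, hi, hmin⟩ := exists_min_image _ (fun i => c i / g i) hpos
  rw [mem_filter] at hi
  have ht : 0 ≤ c i / g i := div_nonneg (hc i hi.1) hi.2.le
  refine ⟨i, hi.1, fun j => c j - c i / g i * g j, fun j hj => ?_, ?_⟩
  · have hj := mem_of_mem_erase hj
    rcases le_or_gt (g j) 0 with hgj | hgj
    · nlinarith [hc j hj]
    · have := hmin j (mem_filter.2 ⟨hj, hgj⟩)
      rw [le_div_iff₀ hgj] at this
      linarith
  · rw [sum_erase _ (by simp [div_mul_cancel₀ _ hi.2.ne'])]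
    simp only [sub_smul, mul_smul, sum_sub_distrib, ← smul_sum, hg, smul_zero, sub_zero]

theorem exists_linearIndepOn_nonneg_sum_eq (s : Finset ι) {c : ι → K} (hc : ∀ i ∈ s, 0 ≤ c i) :
    ∃ t ⊆ s, LinearIndepOn K v t ∧ ∃ c' : ι → K, (∀ i ∈ t, 0 ≤ c' i) ∧
      ∑ i ∈ t, c' i • v i = ∑ i ∈ s, c i • v i := by
  classical
  induction s using Finset.strongInduction generalizing c with
  | H s ih =>
    by_cases hs : LinearIndepOn K v s
    · exact ⟨s, subset_rfl, hs, c, hc, rfl⟩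
    obtain ⟨i, hi, c', hc', hsum⟩ := exists_mem_nonneg_sum_erase_eq_of_not_linearIndepOn hs hc
    obtain ⟨t, hts, ht, c'', hc'', hsum'⟩ := ih _ (erase_ssubset hi) hc'
    exact ⟨t, hts.trans (erase_subset _ _), ht, c'', hc'', hsum'.trans hsum⟩

end Caratheodory

section Lattice

variable {ι : Type*} [Fintype ι]

theorem LinearMap.exists_nat_smul_comp_intCast_eq {κ : Type*} [Fintype κ]
    (g : (ι → ℚ) →ₗ[ℚ] κ → ℚ) :
    ∃ N : ℕ, 0 < N ∧ ∀ χ : ι → ℤ, ∃ z : κ → ℤ, (N : ℚ) • g (Int.cast ∘ χ) = Int.cast ∘ z := by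
  classical
  set q : ι → κ → ℚ := fun i => g fun i' => if i = i' then 1 else 0
  set N := ∏ i, ∏ j, (q i j).den
  have hint : ∀ i j, ∃ z : ℤ, (N : ℚ) * q i j = z := fun i j => by
    obtain ⟨u, hu⟩ : (q i j).den ∣ N :=
      (dvd_prod_of_mem (fun j => (q i j).den) (mem_univ j)).trans
        (dvd_prod_of_mem (fun i => ∏ j, (q i j).den) (mem_univ i))
    exact ⟨u * (q i j).num, by rw [hu]; push_cast; rw [← Rat.mul_den_eq_num]; ring⟩
  choose z hz using hint
  refine ⟨N, prod_pos fun i _ => prod_pos fun j _ => (q i j).den_pos, fun χ =>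
    ⟨fun j => ∑ i, χ i * z i j, funext fun j => ?_⟩⟩
  rw [pi_eq_sum_univ (Int.cast ∘ χ : ι → ℚ)]
  simp [← hz, q, Finset.mul_sum, mul_left_comm]

theorem exists_nsmul_mem_closure_of_linearIndepOn {t : Finset (ι → ℤ)}
    (ht : LinearIndepOn ℚ (fun w : ι → ℤ => (Int.cast ∘ w : ι → ℚ)) t) :
    ∃ N : ℕ, 0 < N ∧ ∀ (χ : ι → ℤ) (c : (ι → ℤ) → ℚ), (∀ w ∈ t, 0 ≤ c w) →
      ∑ w ∈ t, c w • (Int.cast ∘ w : ι → ℚ) = Int.cast ∘ χ →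
      N • χ ∈ AddSubmonoid.closure (t : Set (ι → ℤ)) := by
  -- the coordinates along `t` are the values of a linear map on `ℚ^ι`
  obtain ⟨g, hg⟩ := LinearMap.exists_leftInverse_of_injective _
    (LinearMap.ker_eq_bot.2 (linearIndependent_iff_injective_fintypeLinearCombination.1 ht))
  obtain ⟨N, hN, hz⟩ := g.exists_nat_smul_comp_intCast_eq
  refine ⟨N, hN, fun χ c hc hχ => ?_⟩
  obtain ⟨z, hz⟩ := hz χ
  have hgχ : g (Int.cast ∘ χ) = fun w : (t : Set (ι → ℤ)) => c w := by
    rw [← hχ, ← sum_coe_sort]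
    exact LinearMap.congr_fun hg (fun w : (t : Set (ι → ℤ)) => c w)
  have hcz : ∀ w : (t : Set (ι → ℤ)), (N : ℚ) * c w = z w := fun w => by
    simpa [hgχ] using congrFun hz w
  have hNχ : N • χ = ∑ w : (t : Set (ι → ℤ)), (z w).toNat • (w : ι → ℤ) := by
    have hz0 : ∀ w, 0 ≤ z w := fun w => by
      exact_mod_cast hcz w ▸ mul_nonneg N.cast_nonneg (hc w w.2)
    have hχi := fun i => congrFun hχ i
    rw [← sum_coe_sort] at hχi
    funext i
    simp only [Finset.sum_apply, Pi.smul_apply, Function.comp_apply, smul_eq_mul] at hχi ⊢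
    simp only [nsmul_eq_mul, Int.natCast_toNat_eq_self.2 (hz0 _)]
    exact_mod_cast (show (N : ℚ) * χ i = ∑ w : (t : Set (ι → ℤ)), (z w : ℚ) * (w : ι → ℤ) i by
      simp only [← hcz, mul_assoc, ← mul_sum]; exact congrArg _ (hχi i).symm)
  rw [hNχ]
  exact AddSubmonoid.sum_mem _ fun w _ =>
    AddSubmonoid.nsmul_mem _ (AddSubmonoid.subset_closure w.2) _

theorem exists_nsmul_mem_closure_of_nsmul_mem_closure (W₀ : Finset (ι → ℤ)) :
    ∃ N : ℕ, 0 < N ∧ ∀ W ⊆ W₀, ∀ (χ : ι → ℤ) (m : ℕ), 0 < m →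
      m • χ ∈ AddSubmonoid.closure (W : Set (ι → ℤ)) →
      N • χ ∈ AddSubmonoid.closure (W : Set (ι → ℤ)) := by
  classical
  choose! Nt hNt hNt' using fun (t : Finset (ι → ℤ))
    (ht : LinearIndepOn ℚ (fun w : ι → ℤ => (Int.cast ∘ w : ι → ℚ)) t) =>
    exists_nsmul_mem_closure_of_linearIndepOn ht
  set T : Finset (Finset (ι → ℤ)) :=
    {t ∈ W₀.powerset | LinearIndepOn ℚ (fun w : ι → ℤ => (Int.cast ∘ w : ι → ℚ)) t}
  refine ⟨∏ t ∈ T, Nt t, prod_pos fun t ht => hNt t (mem_filter.1 ht).2,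
    fun W hW χ m hm hmχ => ?_⟩
  obtain ⟨a, -, ha⟩ := AddSubmonoid.mem_closure_finset.1 hmχ
  have hχ : ∑ w ∈ W, ((a w : ℚ) / m) • (Int.cast ∘ w : ι → ℚ) = Int.cast ∘ χ := by
    have hm : (m : ℚ) ≠ 0 := by positivity
    funext i
    have hi : ∑ w ∈ W, (a w : ℚ) * w i = m * χ i := by exact_mod_cast by simpa using congrFun ha i
    simp only [Finset.sum_apply, Pi.smul_apply, Function.comp_apply, smul_eq_mul,
      div_mul_eq_mul_div, ← sum_div, hi, mul_div_cancel_left₀ _ hm]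
  obtain ⟨t, htW, ht, c, hc, hct⟩ :=
    exists_linearIndepOn_nonneg_sum_eq (v := fun w : ι → ℤ => (Int.cast ∘ w : ι → ℚ)) W
      (c := fun w => (a w : ℚ) / m) (fun w _ => by positivity)
  obtain ⟨u, hu⟩ : Nt t ∣ ∏ t ∈ T, Nt t :=
    dvd_prod_of_mem Nt (mem_filter.2 ⟨mem_powerset.2 (htW.trans hW), ht⟩)
  rw [hu, mul_comm, mul_smul]
  exact AddSubmonoid.nsmul_mem _ (AddSubmonoid.closure_mono (by exact_mod_cast htW)
    (hNt' t ht χ c hc (hct.trans hχ))) u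

end Lattice

/-- The monoid whose `ℚ≥0`-cone is `orbitCone 𝒜 𝔭`. -/
def orbitMonoid {ι A σ : Type*} [AddMonoid ι] [CommSemiring A] [SetLike σ A] (𝒜 : ι → σ)
    [SetLike.GradedMonoid 𝒜] (𝔭 : Ideal A) [𝔭.IsPrime] : AddSubmonoid ι where
  carrier := {d | ∃ a ∈ 𝒜 d, a ∉ 𝔭}
  zero_mem' := ⟨1, SetLike.one_mem_graded 𝒜, Ideal.IsPrime.one_notMem ‹_›⟩
  add_mem' := fun ⟨a, ha, haP⟩ ⟨b, hb, hbP⟩ =>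
    ⟨a * b, SetLike.mul_mem_graded ha hb, Ideal.IsPrime.mul_notMem ‹_› haP hbP⟩

section Generators

variable {ι R A : Type*} [DecidableEq ι] [AddMonoid ι] [CommSemiring R] [CommRing A] [Algebra R A]
  (𝒜 : ι → Submodule R A) [GradedAlgebra 𝒜]

theorem orbitMonoid_le_of_adjoin_eq_top (𝔭 : Ideal A) [𝔭.IsPrime] {s : Set A}
    (hs : Algebra.adjoin R s = ⊤) {M : AddSubmonoid ι}
    (hM : ∀ x ∈ s, ∀ d, (decompose 𝒜 x d : A) ∉ 𝔭 → d ∈ M) :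
    orbitMonoid 𝒜 𝔭 ≤ M := by
  classical
  rintro d ⟨a, ha, haP⟩
  suffices h : ∀ x : A, ∀ d, (decompose 𝒜 x d : A) ∉ 𝔭 → d ∈ M from
    h a d (by rwa [decompose_of_mem_same 𝒜 ha])
  intro x
  induction (hs ▸ Algebra.mem_top : x ∈ Algebra.adjoin R s) using Algebra.adjoin_induction with
  | mem x hx => exact hM x hx
  | algebraMap r =>
    intro d hd
    by_cases h0 : d = 0
    · exact h0 ▸ M.zero_mem
    · rw [decompose_of_mem_ne 𝒜 (SetLike.algebraMap_mem_graded 𝒜 r) (Ne.symm h0)] at hd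
      exact absurd 𝔭.zero_mem hd
  | add x y _ _ hx hy =>
    intro d hd
    rw [decompose_add, DirectSum.add_apply, Submodule.coe_add] at hd
    by_cases hxd : (decompose 𝒜 x d : A) ∈ 𝔭
    · exact hy d fun hyd => hd (𝔭.add_mem hxd hyd)
    · exact hx d hxd
  | mul x y _ _ hx hy =>
    intro d hd
    rw [decompose_mul, coe_mul_apply] at hd
    obtain ⟨ij, hij, hP⟩ : ∃ ij ∈ {ij ∈ (decompose 𝒜 x).support ×ˢ (decompose 𝒜 y).support |
        ij.1 + ij.2 = d}, (decompose 𝒜 x ij.1 * decompose 𝒜 y ij.2 : A) ∉ 𝔭 := by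
      by_contra! h
      exact hd (𝔭.sum_mem h)
    rw [← (mem_filter.1 hij).2]
    exact M.add_mem (hx _ fun h => hP (𝔭.mul_mem_right _ h))
      (hy _ fun h => hP (𝔭.mul_mem_left _ h))

theorem Algebra.FiniteType.exists_finset_forall_orbitMonoid_eq_closure
    (hfg : Algebra.FiniteType R A) :
    ∃ W₀ : Finset ι, ∀ (𝔭 : Ideal A) [𝔭.IsPrime], ∃ W ⊆ W₀,
      orbitMonoid 𝒜 𝔭 = AddSubmonoid.closure (W : Set ι) := by
  classical
  obtain ⟨s, hs⟩ := hfg.out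
  refine ⟨s.biUnion fun x => (decompose 𝒜 x).support, fun 𝔭 _ =>
    ⟨{d ∈ s.biUnion fun x => (decompose 𝒜 x).support | d ∈ orbitMonoid 𝒜 𝔭}, filter_subset _ _,
      le_antisymm (orbitMonoid_le_of_adjoin_eq_top 𝒜 𝔭 hs fun x hx d hd => ?_) ?_⟩⟩
  · refine AddSubmonoid.subset_closure
      (mem_filter.2 ⟨mem_biUnion.2 ⟨x, hx, ?_⟩, _, SetLike.coe_mem _, hd⟩)
    exact DFinsupp.mem_support_iff.2 fun h => hd (by simp [h])
  · exact AddSubmonoid.closure_le.2 fun d hd => (mem_filter.1 hd).2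

end Generators

theorem RingHom.finite_of_forall_eq_sum_mul {A B : Type*} [CommRing A] [CommRing B]
    (f : A →+* B) (s : Finset B) (h : ∀ b : B, ∃ c : B → A, b = ∑ x ∈ s, f (c x) * x) :
    f.Finite := by
  let := f.toAlgebra
  refine ⟨⟨s, eq_top_iff.2 fun b _ => ?_⟩⟩
  obtain ⟨c, rfl⟩ := h b
  exact Submodule.sum_mem _ fun x hx => Submodule.smul_mem _ (c x) (Submodule.subset_span hx)

section Integral

variable {ι A B σ τ : Type*} [DecidableEq ι] [AddRightCancelMonoid ι] [CommRing A] [CommRing B]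
  [SetLike σ A] [AddSubmonoidClass σ A] [SetLike τ B] [AddSubmonoidClass τ B]
  {𝒜 : ι → σ} {ℬ : ι → τ} [GradedRing 𝒜] [GradedRing ℬ]

theorem GradedRingHom.coe_decompose_eval₂_natDegree_nsmul (f : 𝒜 →+*ᵍ ℬ) {ψ : ι} {b : B}
    (hb : b ∈ ℬ ψ) (p : Polynomial A) :
    (decompose ℬ (p.eval₂ f.toRingHom b) (p.natDegree • ψ) : B) =
      ∑ i ∈ range (p.natDegree + 1),
        f (decompose 𝒜 (p.coeff i) ((p.natDegree - i) • ψ)) * b ^ i := by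
  rw [← GradedRing.proj_apply, Polynomial.eval₂_eq_sum_range, map_sum]
  refine sum_congr rfl fun i hi => ?_
  rw [← Nat.sub_add_cancel (mem_range_succ_iff.1 hi), add_nsmul, Nat.add_sub_cancel,
    GradedRing.proj_apply, coe_decompose_mul_add_of_right_mem ℬ (SetLike.pow_mem_graded i hb),
    GradedRingHom.map_directSumDecompose]
  rfl

theorem exists_nsmul_mem_orbitMonoid_comap_of_isIntegralElem (f : 𝒜 →+*ᵍ ℬ) (P : Ideal B)
    [P.IsPrime] {ψ : ι} {b : B} (hb : b ∈ ℬ ψ) (hbP : b ∉ P) (hint : f.toRingHom.IsIntegralElem b) :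
    ∃ m, 0 < m ∧ m • ψ ∈ orbitMonoid 𝒜 (P.comap f) := by
  obtain ⟨p, hmonic, hp⟩ := hint
  -- `key : b ^ r = -∑ i < r, f aᵢ * b ^ i` with `aᵢ ∈ 𝒜 ((r - i) • ψ)`, where `r = p.natDegree`
  have key := f.coe_decompose_eval₂_natDegree_nsmul hb p
  rw [hp, decompose_zero, DirectSum.zero_apply, ZeroMemClass.coe_zero, sum_range_succ,
    hmonic.coeff_natDegree, Nat.sub_self, zero_nsmul,
    decompose_of_mem_same 𝒜 (SetLike.one_mem_graded 𝒜), map_one, one_mul, eq_comm,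
    add_eq_zero_iff_eq_neg'] at key
  by_contra! h
  refine hbP (‹P.IsPrime›.mem_of_pow_mem p.natDegree ?_)
  rw [key]
  refine P.neg_mem (P.sum_mem fun i hi => P.mul_mem_right _ (not_not.1 fun hP => ?_))
  exact h (p.natDegree - i) (Nat.sub_pos_of_lt (mem_range.1 hi)) ⟨_, SetLike.coe_mem _, hP⟩

end Integral

theorem uniform_surjectivity_on_multiples_general
    (k : Type) [Field k] {n : ℕ}
    (A : Type) [CommRing A] [Algebra k A]
    (𝒜 : (Fin n → ℤ) → Submodule k A) [GradedAlgebra 𝒜]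
    (hfg : Algebra.FiniteType k A) :
    ∃ N : ℕ, 0 < N ∧
      ∀ (B : Type) [CommRing B] [Algebra k B]
        (ℬ : (Fin n → ℤ) → Submodule k B) [GradedAlgebra ℬ] (φ : A →ₐ[k] B),
        IsASTV 𝒜 ℬ φ → ∀ χ ∈ satWeightSet 𝒜,
          Submodule.map φ.toLinearMap (𝒜 (N • χ)) = ℬ (N • χ) := by
  obtain ⟨W₀, hW₀⟩ := hfg.exists_finset_forall_orbitMonoid_eq_closure 𝒜
  obtain ⟨N, hN, hsat⟩ := exists_nsmul_mem_closure_of_nsmul_mem_closure W₀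
  refine ⟨N, hN, fun B _ _ ℬ _ φ ⟨_, hgr, hdim, hvanish, s, hs⟩ χ _ => ?_⟩
  let f : 𝒜 →+*ᵍ ℬ := ⟨φ.toRingHom, hgr _ _⟩
  refine le_antisymm (Submodule.map_le_iff_le_comap.2 fun a => hgr _ a) ?_
  by_cases hB : ℬ (N • χ) = ⊥
  · exact hB ▸ bot_le
  obtain ⟨b, hb, hb0⟩ := (Submodule.ne_bot_iff _).1 hB
  obtain ⟨P, hP, hbP⟩ : ∃ P : Ideal B, P.IsPrime ∧ b ∉ P := by
    by_contra! h
    exact hb0 (nilpotent_iff_mem_prime.2 h).eq_zero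
  obtain ⟨m, hm, hmP⟩ := exists_nsmul_mem_orbitMonoid_comap_of_isIntegralElem f P hb hbP
    ((f.toRingHom.finite_of_forall_eq_sum_mul s hs).to_isIntegral b)
  obtain ⟨W, hW, hPW⟩ := hW₀ (P.comap f)
  obtain ⟨a, ha, haP⟩ : N • χ ∈ orbitMonoid 𝒜 (P.comap f) := by
    rw [hPW] at hmP ⊢
    exact hsat W hW χ (m * N) (Nat.mul_pos hm hN) (by rwa [mul_smul])
  have hφa : φ a ≠ 0 := fun h => haP (show φ a ∈ P from h ▸ P.zero_mem)
  rw [eq_span_singleton_of_mem_of_finrank_eq_one (hdim _ (not_imp_comm.1 (hvanish _) hB))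
    (hgr _ a ha) hφa, Submodule.span_singleton_le_iff_mem]
  exact Submodule.mem_map_of_mem ha

/-- there is a positive integer `N`, depending only on `(A, 𝒜)`, such that for
every affine stable toric variety `(B, φ)` over `A` and every `χ ∈ Σ̂_A` one has
`φ(A_{Nχ}) = B_{Nχ}`. -/
theorem uniform_surjectivity_on_multiples
    (k : Type) [Field k] [IsAlgClosed k] [CharZero k] {n : ℕ}
    (A : Type) [CommRing A] [IsDomain A] [Algebra k A]
    (𝒜 : (Fin n → ℤ) → Submodule k A) [GradedAlgebra 𝒜]
    (hfg : Algebra.FiniteType k A) :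
    ∃ N : ℕ, 0 < N ∧
      ∀ (B : Type) [CommRing B] [Algebra k B]
        (ℬ : (Fin n → ℤ) → Submodule k B) [GradedAlgebra ℬ] (φ : A →ₐ[k] B),
        IsASTV 𝒜 ℬ φ → ∀ χ ∈ satWeightSet 𝒜,
          Submodule.map φ.toLinearMap (𝒜 (N • χ)) = ℬ (N • χ) :=
  uniform_surjectivity_on_multiples_general k A 𝒜 hfg
end

section
/- Let (B, φ) and (B', φ') be affine stable toric varieties over A, and let α : B' → B be a graded k-algebra homomorphism satisfying α ∘ φ' = φ. Then α is an isomorphism. -/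
open DirectSum Polynomial

section Graded

variable {ι A B σ τ : Type*} [DecidableEq ι] [SetLike σ A] [SetLike τ B] {𝒜 : ι → σ} {ℬ : ι → τ}

theorem Graded.bijective_of_forall_bijOn [Semiring A] [Semiring B] [AddSubmonoidClass σ A]
    [AddSubmonoidClass τ B] [AddMonoid ι] [GradedRing 𝒜] [GradedRing ℬ]
    {F : Type*} [FunLike F A B] [GradedFunLike F 𝒜 ℬ] [RingHomClass F A B]
    (f : F) (h : ∀ i, Set.BijOn f (𝒜 i) (ℬ i)) : Function.Bijective f := by
  classical
  constructor
  · intro x y hxy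
    apply (decompose 𝒜).injective
    ext i
    exact (h i).injOn (SetLike.coe_mem _) (SetLike.coe_mem _)
      (by simp only [map_directSumDecompose 𝒜 ℬ, hxy])
  · intro b
    choose y _ hfy using fun i => (h i).surjOn (SetLike.coe_mem (decompose ℬ b i))
    refine ⟨∑ i ∈ DFinsupp.support (decompose ℬ b), y i, ?_⟩
    simp only [map_sum, hfy, sum_support_decompose]

theorem GradedRingHom.exists_pos_nsmul_map_ne_zero [CommRing A] [CommRing B]
    [AddSubmonoidClass σ A] [AddSubmonoidClass τ B] [AddRightCancelMonoid ι]
    [GradedRing 𝒜] [GradedRing ℬ] [IsReduced B]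
    (f : 𝒜 →+*ᵍ ℬ) {χ : ι} {u : B} (hu : u ∈ ℬ χ) (hu0 : u ≠ 0)
    (hint : f.toRingHom.IsIntegralElem u) :
    ∃ m, 0 < m ∧ ∃ a ∈ 𝒜 (m • χ), f a ≠ 0 := by
  by_contra! hf
  obtain ⟨p, hmonic, hpu⟩ := hint
  set d := p.natDegree
  have hterm : ∀ i ∈ Finset.range (d + 1),
      GradedRing.proj ℬ (d • χ) (f.toRingHom (p.coeff i) * u ^ i) =
        if i = d then u ^ d else 0 := by
    intro i hi
    have hid : i ≤ d := Nat.lt_succ_iff.mp (Finset.mem_range.mp hi)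
    have hdi : d • χ = (d - i) • χ + i • χ := by rw [← add_nsmul, Nat.sub_add_cancel hid]
    rw [GradedRing.proj_apply, hdi,
      coe_decompose_mul_add_of_right_mem ℬ (SetLike.pow_mem_graded i hu),
      GradedRingHom.coe_toRingHom, ← GradedRingHom.map_directSumDecompose]
    split_ifs with hi_eq
    · subst hi_eq
      rw [hmonic.coeff_natDegree, Nat.sub_self, zero_nsmul,
        decompose_of_mem_same 𝒜 SetLike.GradedOne.one_mem, map_one, one_mul]
    · rw [hf _ (by omega) _ (SetLike.coe_mem _), zero_mul]
  have hud : u ^ d = 0 := by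
    have h := congrArg (GradedRing.proj ℬ (d • χ)) hpu
    rwa [eval₂_eq_sum_range, map_sum, map_zero, Finset.sum_congr rfl hterm, Finset.sum_ite_eq',
      if_pos (Finset.self_mem_range_succ d)] at h
  exact pow_ne_zero d hu0 hud

end Graded

theorem RingHom.finite_of_forall_eq_sum {A B : Type*} [CommRing A] [CommRing B] (f : A →+* B)
    (s : Finset B) (hs : ∀ b, ∃ c : B → A, b = ∑ x ∈ s, f (c x) * x) : f.Finite := by
  let := f.toAlgebra
  refine ⟨⟨s, eq_top_iff.mpr fun b _ => ?_⟩⟩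
  obtain ⟨c, rfl⟩ := hs b
  exact Submodule.sum_mem _ fun x hx => Submodule.smul_mem _ (c x) (Submodule.subset_span hx)

section FinrankOne

variable {K V W : Type*} [Field K] [AddCommGroup V] [Module K V] [AddCommGroup W] [Module K W]

theorem Submodule.exists_mem_ne_zero_of_finrank_eq_one {P : Submodule K V}
    (hP : Module.finrank K P = 1) : ∃ u ∈ P, u ≠ 0 :=
  (Submodule.ne_bot_iff P).mp (Submodule.isAtom_iff_finrank_eq_one.mpr hP).ne_bot

theorem Submodule.exists_smul_eq_of_finrank_eq_one {P : Submodule K V}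
    (hP : Module.finrank K P = 1) {u v : V} (hu : u ∈ P) (hu0 : u ≠ 0) (hv : v ∈ P) :
    ∃ c : K, c • u = v :=
  Submodule.mem_span_singleton.mp (eq_span_singleton_of_mem_of_finrank_eq_one hP hu hu0 ▸ hv)

theorem Submodule.bijOn_of_finrank_eq_one {P : Submodule K V} {Q : Submodule K W}
    (hP : Module.finrank K P = 1) (hQ : Module.finrank K Q = 1)
    {F : Type*} [FunLike F V W] [LinearMapClass F K V W] {f : F} (hf : Set.MapsTo f P Q)
    {u : V} (hu : u ∈ P) (hfu : f u ≠ 0) : Set.BijOn f P Q := by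
  have hu0 : u ≠ 0 := fun h => hfu (by rw [h, map_zero])
  refine ⟨hf, fun x hx y hy hxy => ?_, fun w hw => ?_⟩
  · obtain ⟨a, rfl⟩ := exists_smul_eq_of_finrank_eq_one hP hu hu0 hx
    obtain ⟨b, rfl⟩ := exists_smul_eq_of_finrank_eq_one hP hu hu0 hy
    rw [map_smul, map_smul] at hxy
    rw [smul_left_injective K hfu hxy]
  · obtain ⟨c, rfl⟩ := exists_smul_eq_of_finrank_eq_one hQ (hf hu) hfu hw
    exact ⟨c • u, P.smul_mem c hu, map_smul f c u⟩

end FinrankOne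

theorem mem_satWeightSet_of_mem {k A : Type} [CommSemiring k] [Semiring A] [Module k A] {n : ℕ}
    {𝒜 : (Fin n → ℤ) → Submodule k A} {χ : Fin n → ℤ} {a : A} (ha : a ∈ 𝒜 χ) (ha0 : a ≠ 0) :
    χ ∈ satWeightSet 𝒜 :=
  ⟨1, one_pos, by rw [one_smul]; exact (Submodule.ne_bot_iff _).mpr ⟨a, ha, ha0⟩⟩

namespace IsASTV

variable {k : Type} [Field k] {n : ℕ} {A : Type} [CommRing A] [Algebra k A]
  {𝒜 : (Fin n → ℤ) → Submodule k A} [GradedAlgebra 𝒜]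
  {B : Type} [CommRing B] [Algebra k B] {ℬ : (Fin n → ℤ) → Submodule k B} [GradedAlgebra ℬ]
  {φ : A →ₐ[k] B}

theorem exists_pos_nsmul_map_ne_zero (h : IsASTV 𝒜 ℬ φ) {χ : Fin n → ℤ}
    (hχ : χ ∈ satWeightSet 𝒜) : ∃ m, 0 < m ∧ ∃ a ∈ 𝒜 (m • χ), φ a ≠ 0 := by
  obtain ⟨hred, hφ, hrk, -, s, hs⟩ := h
  obtain ⟨u, hu, hu0⟩ := Submodule.exists_mem_ne_zero_of_finrank_eq_one (hrk χ hχ)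
  exact GradedRingHom.exists_pos_nsmul_map_ne_zero (⟨φ.toRingHom, hφ _ _⟩ : 𝒜 →+*ᵍ ℬ) hu hu0
    ((RingHom.finite_of_forall_eq_sum _ s hs).to_isIntegral u)

theorem bijOn_of_mem_satWeightSet (h : IsASTV 𝒜 ℬ φ) {B' : Type} [CommRing B'] [Algebra k B']
    {ℬ' : (Fin n → ℤ) → Submodule k B'} [GradedAlgebra ℬ'] {φ' : A →ₐ[k] B'}
    (h' : IsASTV 𝒜 ℬ' φ') {α : B' →ₐ[k] B} (hgr : ∀ χ b, b ∈ ℬ' χ → α b ∈ ℬ χ)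
    (hcomp : ∀ a, α (φ' a) = φ a) {χ : Fin n → ℤ} (hχ : χ ∈ satWeightSet 𝒜) :
    Set.BijOn α (ℬ' χ) (ℬ χ) := by
  obtain ⟨m, hm, a, ha, hφa⟩ := h.exists_pos_nsmul_map_ne_zero hχ
  obtain ⟨-, -, hrk, -⟩ := h
  obtain ⟨hred', hφ', hrk', -⟩ := h'
  have hmχ := mem_satWeightSet_of_mem ha fun h0 => hφa (by rw [h0, map_zero])
  have hbij_m : Set.BijOn α (ℬ' (m • χ)) (ℬ (m • χ)) :=
    Submodule.bijOn_of_finrank_eq_one (hrk' _ hmχ) (hrk _ hmχ) (hgr _) (hφ' _ _ ha)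
      (by rwa [hcomp])
  obtain ⟨u, hu, hu0⟩ := Submodule.exists_mem_ne_zero_of_finrank_eq_one (hrk' χ hχ)
  have hαu : α u ^ m ≠ 0 := by
    rw [← map_pow, ← map_zero α]
    exact hbij_m.injOn.ne (SetLike.pow_mem_graded m hu) (zero_mem _) (pow_ne_zero m hu0)
  exact Submodule.bijOn_of_finrank_eq_one (hrk' χ hχ) (hrk χ hχ) (hgr χ) hu
    (ne_zero_pow hm.ne' hαu)

end IsASTV

theorem morphism_of_astv_is_isomorphism_general
    (k : Type) [Field k] {n : ℕ}
    (A : Type) [CommRing A] [Algebra k A]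
    (𝒜 : (Fin n → ℤ) → Submodule k A) [GradedAlgebra 𝒜]
    (B : Type) [CommRing B] [Algebra k B]
    (ℬ : (Fin n → ℤ) → Submodule k B) [GradedAlgebra ℬ]
    (φ : A →ₐ[k] B) (hastv : IsASTV 𝒜 ℬ φ)
    (B' : Type) [CommRing B'] [Algebra k B']
    (ℬ' : (Fin n → ℤ) → Submodule k B') [GradedAlgebra ℬ']
    (φ' : A →ₐ[k] B') (hastv' : IsASTV 𝒜 ℬ' φ')
    (α : B' →ₐ[k] B)
    (hgr : ∀ (χ : Fin n → ℤ) (b : B'), b ∈ ℬ' χ → α b ∈ ℬ χ)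
    (hcomp : ∀ a : A, α (φ' a) = φ a) :
    Function.Bijective α := by
  refine Graded.bijective_of_forall_bijOn (⟨α, hgr _ _⟩ : ℬ' →ₐᵍ[k] ℬ) fun χ => ?_
  by_cases hχ : χ ∈ satWeightSet 𝒜
  · exact hastv.bijOn_of_mem_satWeightSet hastv' hgr hcomp hχ
  · obtain ⟨-, -, -, hbot, -⟩ := hastv
    obtain ⟨-, -, -, hbot', -⟩ := hastv'
    rw [hbot χ hχ, hbot' χ hχ, Submodule.bot_coe, Submodule.bot_coe]
    exact Set.bijOn_singleton.mpr (map_zero α)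

/-- a graded `k`-algebra homomorphism `α : B' → B` between affine stable toric
varieties over `A` satisfying `α ∘ φ' = φ` is an isomorphism. -/
theorem morphism_of_astv_is_isomorphism
    (k : Type) [Field k] [IsAlgClosed k] [CharZero k] {n : ℕ}
    (A : Type) [CommRing A] [IsDomain A] [Algebra k A]
    (𝒜 : (Fin n → ℤ) → Submodule k A) [GradedAlgebra 𝒜]
    (hfg : Algebra.FiniteType k A)
    (B : Type) [CommRing B] [Algebra k B]
    (ℬ : (Fin n → ℤ) → Submodule k B) [GradedAlgebra ℬ]
    (φ : A →ₐ[k] B) (hastv : IsASTV 𝒜 ℬ φ)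
    (B' : Type) [CommRing B'] [Algebra k B']
    (ℬ' : (Fin n → ℤ) → Submodule k B') [GradedAlgebra ℬ']
    (φ' : A →ₐ[k] B') (hastv' : IsASTV 𝒜 ℬ' φ')
    (α : B' →ₐ[k] B)
    (hgr : ∀ (χ : Fin n → ℤ) (b : B'), b ∈ ℬ' χ → α b ∈ ℬ χ)
    (hcomp : ∀ a : A, α (φ' a) = φ a) :
    Function.Bijective α :=
  morphism_of_astv_is_isomorphism_general k A 𝒜 B ℬ φ hastv B' ℬ' φ' hastv' α hgr hcomp
end

section
/- Let Λ be a quasifan in ℚⁿ each of whose cones is the ℚ_{≥0}-cone generated by finitely many points of ℤⁿ. Then the quasifan algebra k[Λ] is a finitely generated k-algebra, its weight set equals |Λ| ∩ ℤⁿ, and this weight set is saturated (if m·χ ∈ |Λ| ∩ ℤⁿ for some integer m > 0 then χ ∈ |Λ| ∩ ℤⁿ). Hence Spec k[Λ] is an affine stable toric variety: k[Λ] is finitely generated, reduced, multiplicity-free, with saturated weight set. -/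
/-- A convex cone in `ℚⁿ`: contains `0` and is closed under addition and under
multiplication by nonnegative rational scalars. -/
def IsCone {n : ℕ} (c : Set (Fin n → ℚ)) : Prop :=
  (0 : Fin n → ℚ) ∈ c ∧ (∀ x ∈ c, ∀ y ∈ c, x + y ∈ c) ∧
    ∀ q : ℚ, 0 ≤ q → ∀ x ∈ c, q • x ∈ c

/-- `μ` is a face of the convex cone `c`: a convex subcone such that whenever a sum of two
elements of `c` lies in `μ`, both summands lie in `μ`. -/
def IsFace {n : ℕ} (μ c : Set (Fin n → ℚ)) : Prop :=
  IsCone μ ∧ μ ⊆ c ∧ ∀ x ∈ c, ∀ y ∈ c, x + y ∈ μ → x ∈ μ ∧ y ∈ μ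

/-- A quasifan in `ℚⁿ`: a finite collection of convex cones, closed under passing to faces,
such that the intersection of any two of its cones is a face of each of them. -/
def IsQuasifan {n : ℕ} (Λ : Set (Set (Fin n → ℚ))) : Prop :=
  Λ.Finite ∧ (∀ c ∈ Λ, IsCone c) ∧ (∀ c ∈ Λ, ∀ μ, IsFace μ c → μ ∈ Λ) ∧
    ∀ c ∈ Λ, ∀ c' ∈ Λ, IsFace (c ∩ c') c ∧ IsFace (c ∩ c') c'

/-- The lattice points of the support `|Λ| = ⋃₀ Λ` of a quasifan. -/
def QLat {n : ℕ} (Λ : Set (Set (Fin n → ℚ))) : Type :=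
  {χ : Fin n → ℤ // embQ χ ∈ ⋃₀ Λ}

theorem embQ_add {n : ℕ} (a b : Fin n → ℤ) : embQ (a + b) = embQ a + embQ b := by
  funext i; simp [embQ]

/-- If `χ₁` and `χ₂` lie (after embedding) in a common cone of the quasifan `Λ`, then
`χ₁ + χ₂` is a lattice point of the support of `Λ`. -/
theorem embQ_add_mem_support {n : ℕ} {Λ : Set (Set (Fin n → ℚ))} (hΛ : IsQuasifan Λ)
    {χ₁ χ₂ : Fin n → ℤ} (h : ∃ c ∈ Λ, embQ χ₁ ∈ c ∧ embQ χ₂ ∈ c) :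
    embQ (χ₁ + χ₂) ∈ ⋃₀ Λ := by
  obtain ⟨c, hc, h1, h2⟩ := h
  exact ⟨c, hc, (embQ_add χ₁ χ₂) ▸ (hΛ.2.1 c hc).2.1 _ h1 _ h2⟩

/-- The degree-`χ` component of the quasifan algebra presented by a basis `x` indexed by the
lattice points of the support: the span of `x^χ` if `χ` is a lattice point of the support,
and `0` otherwise. -/
def qfaComponent {n : ℕ} {k C : Type} [Field k] [CommRing C] [Algebra k C]
    {Λ : Set (Set (Fin n → ℚ))} (x : Module.Basis (QLat Λ) k C) (χ : Fin n → ℤ) :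
    Submodule k C :=
  Submodule.span k {y : C | ∃ h : embQ χ ∈ ⋃₀ Λ, y = x ⟨χ, h⟩}

/-!
Finite generation is Gordan's lemma: a lattice point of the cone generated by finitely many
lattice points `S` is a sum of elements of `S` and of one lattice point of the cone lying in a
bounded box, and monomials whose weights share a cone multiply like their weights. For
reducedness, let `σ` be the lexicographically largest weight in the support of `a ≠ 0`: since
`s + t = σ + σ` with `s, t ≤ σ` forces `s = t = σ`, the coefficient of `x^(2σ)` in `a * a` is
`a_σ²`. The weight set is `|Λ| ∩ ℤⁿ` because the `x^χ` are nonzero, and it is saturated because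
cones are stable under scaling by `1 / m`.
-/

section LatticeCone

variable {n : ℕ}

theorem embQ_injective : Function.Injective (embQ (n := n)) :=
  fun _ _ h => funext fun i => Int.cast_injective (congrFun h i)

theorem mem_coneGen_image_embQ_iff (S : Finset (Fin n → ℤ)) (y : Fin n → ℚ) :
    y ∈ coneGen (embQ '' (S : Set (Fin n → ℤ))) ↔
      ∃ d : (Fin n → ℤ) → ℚ, (∀ v, 0 ≤ d v) ∧ y = ∑ v ∈ S, d v • embQ v := by
  constructor
  · rintro ⟨t, c, hts, hc, rfl⟩
    have ht : (S.filter (embQ · ∈ t)).image embQ = t := by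
      ext y
      simp only [Finset.mem_image, Finset.mem_filter]
      refine ⟨?_, fun hy => ?_⟩
      · rintro ⟨v, ⟨-, hv⟩, rfl⟩
        exact hv
      · obtain ⟨v, hv, rfl⟩ := hts hy
        exact ⟨v, ⟨hv, hy⟩, rfl⟩
    refine ⟨fun v => if embQ v ∈ t then c (embQ v) else 0, fun v => ?_, ?_⟩
    · dsimp only
      split_ifs with hv
      exacts [hc _ hv, le_rfl]
    · simp only [ite_smul, zero_smul]
      rw [← Finset.sum_filter, ← Finset.sum_image (f := fun y => c y • y) embQ_injective.injOn,
        ht]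
  · rintro ⟨d, hd, rfl⟩
    refine ⟨S.image embQ, Function.extend embQ d 0, by simp, ?_, ?_⟩
    · rintro _ hy
      obtain ⟨v, -, rfl⟩ := Finset.mem_image.1 hy
      rw [embQ_injective.extend_apply]
      exact hd v
    · rw [Finset.sum_image embQ_injective.injOn]
      simp only [embQ_injective.extend_apply]

theorem embQ_zero : embQ (0 : Fin n → ℤ) = 0 :=
  funext fun _ => Int.cast_zero

theorem embQ_nsmul (m : ℕ) (χ : Fin n → ℤ) : embQ (m • χ) = (m : ℚ) • embQ χ := by
  funext i
  simp [embQ]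

theorem embQ_mem_coneGen_of_mem {S : Finset (Fin n → ℤ)} {v : Fin n → ℤ} (hv : v ∈ S) :
    embQ v ∈ coneGen (embQ '' (S : Set (Fin n → ℤ))) :=
  ⟨{embQ v}, fun _ => 1, by simpa using ⟨v, hv, rfl⟩, by simp, by simp⟩

theorem zero_mem_coneGen (S : Set (Fin n → ℚ)) : (0 : Fin n → ℚ) ∈ coneGen S :=
  ⟨∅, 0, by simp, by simp, by simp⟩

theorem abs_le_sum_abs_of_embQ_eq_sum {S : Finset (Fin n → ℤ)} {ψ : Fin n → ℤ}
    {e : (Fin n → ℤ) → ℚ} (he0 : ∀ v, 0 ≤ e v) (he1 : ∀ v, e v ≤ 1)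
    (hψ : embQ ψ = ∑ v ∈ S, e v • embQ v) (j : Fin n) : |ψ j| ≤ ∑ v ∈ S, |v j| := by
  have hψj : (ψ j : ℚ) = ∑ v ∈ S, e v * v j := by
    simpa [embQ, Finset.sum_apply] using congrFun hψ j
  have : |(ψ j : ℚ)| ≤ ∑ v ∈ S, |(v j : ℚ)| :=
    calc |(ψ j : ℚ)| ≤ ∑ v ∈ S, |e v * v j| := hψj ▸ Finset.abs_sum_le_sum_abs _ _
      _ ≤ ∑ v ∈ S, |(v j : ℚ)| := Finset.sum_le_sum fun v _ => by
          rw [abs_mul, abs_of_nonneg (he0 v)]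
          exact mul_le_of_le_one_left (abs_nonneg _) (he1 v)
  exact_mod_cast this

def coneBox (S : Finset (Fin n → ℤ)) : Set (Fin n → ℤ) :=
  {ψ | (∀ j, |ψ j| ≤ ∑ v ∈ S, |v j|) ∧ embQ ψ ∈ coneGen (embQ '' (S : Set (Fin n → ℤ)))}

theorem coneBox_finite (S : Finset (Fin n → ℤ)) : (coneBox S).Finite :=
  (Set.finite_Icc (-fun j => ∑ v ∈ S, |v j|) fun j => ∑ v ∈ S, |v j|).subset fun _ hψ =>
    ⟨fun j => neg_le_of_abs_le (hψ.1 j), fun j => le_of_abs_le (hψ.1 j)⟩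

theorem zero_mem_coneBox (S : Finset (Fin n → ℤ)) : 0 ∈ coneBox S :=
  ⟨fun _ => by simpa using Finset.sum_nonneg fun v _ => abs_nonneg _,
    embQ_zero (n := n) ▸ zero_mem_coneGen _⟩

theorem mem_coneBox_of_mem {S : Finset (Fin n → ℤ)} {v : Fin n → ℤ} (hv : v ∈ S) :
    v ∈ coneBox S :=
  ⟨fun j => Finset.single_le_sum (f := fun w => |w j|) (fun _ _ => abs_nonneg _) hv,
    embQ_mem_coneGen_of_mem hv⟩

/-- Gordan's lemma: writing `χ = ∑ d v • v` with `d ≥ 0`, the lattice point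
`χ - ∑ ⌊d v⌋ • v = ∑ (d v - ⌊d v⌋) • v` lies in `coneBox S`. -/
theorem mem_closure_coneBox {S : Finset (Fin n → ℤ)} {χ : Fin n → ℤ}
    (hχ : embQ χ ∈ coneGen (embQ '' (S : Set (Fin n → ℤ)))) :
    χ ∈ AddSubmonoid.closure (coneBox S) := by
  obtain ⟨d, hd, hχ⟩ := (mem_coneGen_image_embQ_iff S _).1 hχ
  set e : (Fin n → ℤ) → ℚ := fun v => d v - ⌊d v⌋₊
  have he0 : ∀ v, 0 ≤ e v := fun v => sub_nonneg.2 (Nat.floor_le (hd v))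
  have he1 : ∀ v, e v ≤ 1 := fun v => by
    have := Nat.lt_floor_add_one (d v)
    simp only [e]
    linarith
  set r := χ - ∑ v ∈ S, ⌊d v⌋₊ • v
  have hr : embQ r = ∑ v ∈ S, e v • embQ v := by
    funext j
    have := congrFun hχ j
    simp only [embQ, r, e, Finset.sum_apply, Pi.sub_apply, Pi.smul_apply, smul_eq_mul,
      nsmul_eq_mul, Pi.mul_apply, Pi.natCast_apply, sub_mul, Finset.sum_sub_distrib] at this ⊢
    push_cast
    linarith
  have hrB : r ∈ coneBox S :=
    ⟨abs_le_sum_abs_of_embQ_eq_sum he0 he1 hr, (mem_coneGen_image_embQ_iff S _).2 ⟨e, he0, hr⟩⟩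
  rw [← sub_add_cancel χ (∑ v ∈ S, ⌊d v⌋₊ • v)]
  exact add_mem (AddSubmonoid.subset_closure hrB) (sum_mem fun v hv =>
    nsmul_mem (AddSubmonoid.subset_closure (mem_coneBox_of_mem hv)) _)

theorem embQ_mem_sUnion_of_nsmul {Λ : Set (Set (Fin n → ℚ))} (hΛ : ∀ c ∈ Λ, IsCone c)
    {χ : Fin n → ℤ} {m : ℕ} (hm : 0 < m) (h : embQ (m • χ) ∈ ⋃₀ Λ) : embQ χ ∈ ⋃₀ Λ := by
  obtain ⟨c, hc, hmc⟩ := h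
  refine ⟨c, hc, ?_⟩
  have := (hΛ c hc).2.2 (m : ℚ)⁻¹ (by positivity) _ hmc
  rwa [embQ_nsmul, smul_smul, inv_mul_cancel₀ (by positivity), one_smul] at this

end LatticeCone

theorem finiteType_of_basis_mem_adjoin {R A ι : Type*} [CommSemiring R] [Semiring A]
    [Algebra R A] (x : Module.Basis ι R A) {G : Set A} (hG : G.Finite)
    (h : ∀ i, x i ∈ Algebra.adjoin R G) : Algebra.FiniteType R A := by
  refine ⟨⟨hG.toFinset, eq_top_iff.2 fun z _ => ?_⟩⟩
  rw [hG.coe_toFinset]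
  exact (Submodule.span_le (p := Subalgebra.toSubmodule (Algebra.adjoin R G))).2
    (Set.range_subset_iff.2 h) (x.mem_span z)

theorem isReduced_of_monomial_basis {k A ι M : Type*} [CommSemiring k] [NoZeroDivisors k]
    [CommSemiring A] [Algebra k A] [AddCommMonoid M] [LinearOrder M]
    [IsOrderedCancelAddMonoid M] (x : Module.Basis ι k A) (deg : ι → M)
    (hdeg : Function.Injective deg)
    (hmul : ∀ s t, x s * x t = 0 ∨ ∃ u, deg u = deg s + deg t ∧ x s * x t = x u)
    (hsq : ∀ s, x s * x s ≠ 0) : IsReduced A := by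
  refine (isReduced_iff_pow_one_lt 2 one_lt_two).2 fun a ha => ?_
  by_contra ha0
  set f := x.repr a
  obtain ⟨σ, hσ, hmax⟩ := f.support.exists_max_image deg
    (Finsupp.support_nonempty_iff.2 (x.repr.map_ne_zero_iff.2 ha0))
  obtain ⟨u, hu, hσσ⟩ := (hmul σ σ).resolve_left (hsq σ)
  -- since `deg σ` is maximal, only `x σ * x σ` contributes to the coefficient of `x u` in `a * a`
  have hoff : ∀ s ∈ f.support, ∀ t ∈ f.support, ¬(s = σ ∧ t = σ) →
      x.repr (x s * x t) u = 0 := by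
    intro s hs t ht hst
    rcases hmul s t with h0 | ⟨u', hu', hst'⟩
    · rw [h0, map_zero, Finsupp.zero_apply]
    · rw [hst', x.repr_self, Finsupp.single_eq_of_ne]
      rintro rfl
      have := (add_eq_add_iff_eq_and_eq (hmax s hs) (hmax t ht)).1 (hu'.symm.trans hu)
      exact hst ⟨hdeg this.1, hdeg this.2⟩
  have hexp : a = ∑ s ∈ f.support, f s • x s := (x.linearCombination_repr a).symm
  have hcoeff : x.repr (a ^ 2) u = f σ * f σ := by
    rw [sq]
    conv_lhs => rw [hexp, Finset.sum_mul_sum]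
    simp only [smul_mul_smul_comm, map_sum, map_smul, Finsupp.coe_finsetSum,
      Finset.sum_apply, Finsupp.smul_apply, smul_eq_mul]
    rw [Finset.sum_eq_single_of_mem σ hσ, Finset.sum_eq_single_of_mem σ hσ, hσσ, x.repr_self,
      Finsupp.single_eq_same, mul_one]
    · exact fun t ht htσ => by rw [hoff σ hσ t ht (fun h => htσ h.2), mul_zero]
    · exact fun s hs hsσ => Finset.sum_eq_zero fun t ht => by
        rw [hoff s hs t ht (fun h => hsσ h.1), mul_zero]
  rw [ha, map_zero, Finsupp.zero_apply] at hcoeff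
  exact Finsupp.mem_support_iff.1 hσ (mul_self_eq_zero.1 hcoeff.symm)

section QuasifanAlgebra

variable {n : ℕ} {k C : Type} [Field k] [CommRing C] [Algebra k C]
  {Λ : Set (Set (Fin n → ℚ))} (x : Module.Basis (QLat Λ) k C)

theorem qfaComponent_eq_span_singleton {χ : Fin n → ℤ} (h : embQ χ ∈ ⋃₀ Λ) :
    qfaComponent x χ = k ∙ x ⟨χ, h⟩ := by
  rw [qfaComponent]
  congr 1
  ext y
  exact ⟨fun ⟨_, hy⟩ => hy, fun hy => ⟨h, hy⟩⟩

theorem qfaComponent_eq_bot {χ : Fin n → ℤ} (h : embQ χ ∉ ⋃₀ Λ) : qfaComponent x χ = ⊥ := by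
  rw [qfaComponent, Submodule.span_eq_bot]
  rintro _ ⟨h', -⟩
  exact absurd h' h

theorem qfaComponent_ne_bot_iff (χ : Fin n → ℤ) : qfaComponent x χ ≠ ⊥ ↔ embQ χ ∈ ⋃₀ Λ := by
  refine ⟨fun h => by_contra fun hχ => h (qfaComponent_eq_bot x hχ), fun h => ?_⟩
  rw [qfaComponent_eq_span_singleton x h, Ne, Submodule.span_singleton_eq_bot]
  exact x.ne_zero _

theorem finrank_qfaComponent_le_one (χ : Fin n → ℤ) :
    Module.finrank k (qfaComponent x χ) ≤ 1 := by
  by_cases h : embQ χ ∈ ⋃₀ Λ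
  · rw [qfaComponent_eq_span_singleton x h]
    exact (finrank_span_singleton (x.ne_zero _)).le
  · rw [qfaComponent_eq_bot x h, finrank_bot]
    exact zero_le_one

theorem basis_mem_adjoin_of_mem_closure (hΛ : IsQuasifan Λ)
    (hmul : ∀ (χ₁ χ₂ : QLat Λ) (h : ∃ c ∈ Λ, embQ χ₁.1 ∈ c ∧ embQ χ₂.1 ∈ c),
      x χ₁ * x χ₂ = x ⟨χ₁.1 + χ₂.1, embQ_add_mem_support hΛ h⟩)
    {c : Set (Fin n → ℚ)} (hc : c ∈ Λ)
    {B : Set (Fin n → ℤ)} (hB : ∀ ψ ∈ B, embQ ψ ∈ c) (hB0 : 0 ∈ B) {χ : Fin n → ℤ}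
    (hχ : χ ∈ AddSubmonoid.closure B) (hχΛ : embQ χ ∈ ⋃₀ Λ) :
    x ⟨χ, hχΛ⟩ ∈ Algebra.adjoin k (x '' {σ | σ.1 ∈ B}) := by
  have hgen : ∀ ψ ∈ B, ∀ h, x ⟨ψ, h⟩ ∈ Algebra.adjoin k (x '' {σ | σ.1 ∈ B}) :=
    fun ψ hψ h => Algebra.subset_adjoin ⟨⟨ψ, h⟩, hψ, rfl⟩
  suffices H : ∀ χ ∈ AddSubmonoid.closure B,
      embQ χ ∈ c ∧ ∀ h, x ⟨χ, h⟩ ∈ Algebra.adjoin k (x '' {σ | σ.1 ∈ B}) from (H χ hχ).2 hχΛ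
  intro χ hχ
  induction hχ using AddSubmonoid.closure_induction with
  | mem ψ hψ => exact ⟨hB ψ hψ, hgen ψ hψ⟩
  | zero => exact ⟨hB 0 hB0, hgen 0 hB0⟩
  | add a b _ _ ha hb =>
    have hab : ∃ c' ∈ Λ, embQ a ∈ c' ∧ embQ b ∈ c' := ⟨c, hc, ha.1, hb.1⟩
    refine ⟨embQ_add a b ▸ (hΛ.2.1 c hc).2.1 _ ha.1 _ hb.1, fun h => ?_⟩
    rw [← hmul ⟨a, c, hc, ha.1⟩ ⟨b, c, hc, hb.1⟩ hab]
    exact mul_mem (ha.2 _) (hb.2 _)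

theorem finiteType_of_cones_eq_coneGen (hΛ : IsQuasifan Λ)
    (hmul : ∀ (χ₁ χ₂ : QLat Λ) (h : ∃ c ∈ Λ, embQ χ₁.1 ∈ c ∧ embQ χ₂.1 ∈ c),
      x χ₁ * x χ₂ = x ⟨χ₁.1 + χ₂.1, embQ_add_mem_support hΛ h⟩)
    (hpoly : ∀ c ∈ Λ, ∃ S : Finset (Fin n → ℤ), c = coneGen (embQ '' (S : Set (Fin n → ℤ)))) :
    Algebra.FiniteType k C := by
  choose S hS using hpoly
  have hT : (⋃ (c) (hc : c ∈ Λ), coneBox (S c hc)).Finite :=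
    hΛ.1.biUnion' fun c hc => coneBox_finite (S c hc)
  refine finiteType_of_basis_mem_adjoin x ((hT.preimage Subtype.val_injective.injOn).image x)
    fun σ => ?_
  obtain ⟨c, hc, hσc⟩ := σ.2
  have hB : ∀ ψ ∈ coneBox (S c hc), embQ ψ ∈ c := fun ψ hψ => by rw [hS c hc]; exact hψ.2
  have hσ : σ.1 ∈ AddSubmonoid.closure (coneBox (S c hc)) := by
    rw [hS c hc] at hσc
    exact mem_closure_coneBox hσc
  have hsub : {τ : QLat Λ | τ.1 ∈ coneBox (S c hc)} ⊆
      Subtype.val ⁻¹' ⋃ (c) (hc : c ∈ Λ), coneBox (S c hc) :=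
    fun τ hτ => Set.mem_iUnion₂.2 ⟨c, hc, hτ⟩
  exact Algebra.adjoin_mono (Set.image_mono hsub)
    (basis_mem_adjoin_of_mem_closure x hΛ hmul hc hB (zero_mem_coneBox _) hσ σ.2)

theorem isReduced_of_isQuasifan (hΛ : IsQuasifan Λ)
    (hmul : ∀ (χ₁ χ₂ : QLat Λ) (h : ∃ c ∈ Λ, embQ χ₁.1 ∈ c ∧ embQ χ₂.1 ∈ c),
      x χ₁ * x χ₂ = x ⟨χ₁.1 + χ₂.1, embQ_add_mem_support hΛ h⟩)
    (hmul0 : ∀ χ₁ χ₂ : QLat Λ, (¬ ∃ c ∈ Λ, embQ χ₁.1 ∈ c ∧ embQ χ₂.1 ∈ c) → x χ₁ * x χ₂ = 0) :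
    IsReduced C := by
  refine isReduced_of_monomial_basis x (fun σ => toLex σ.1)
    (toLex.injective.comp Subtype.val_injective) (fun s t => ?_) fun s => ?_
  · by_cases h : ∃ c ∈ Λ, embQ s.1 ∈ c ∧ embQ t.1 ∈ c
    exacts [.inr ⟨_, rfl, hmul s t h⟩, .inl (hmul0 s t h)]
  · obtain ⟨c, hc, hs⟩ := s.2
    rw [hmul s s ⟨c, hc, hs, hs⟩]
    exact x.ne_zero _

end QuasifanAlgebra

theorem quasifan_algebra_is_astv_general {n : ℕ} (k : Type) [Field k]
    (Λ : Set (Set (Fin n → ℚ))) (hΛ : IsQuasifan Λ)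
    (hpoly : ∀ c ∈ Λ, ∃ S : Finset (Fin n → ℤ), c = coneGen (embQ '' (S : Set (Fin n → ℤ))))
    (C : Type) [CommRing C] [Algebra k C] (x : Module.Basis (QLat Λ) k C)
    (hmul : ∀ (χ₁ χ₂ : QLat Λ) (h : ∃ c ∈ Λ, embQ χ₁.1 ∈ c ∧ embQ χ₂.1 ∈ c),
      x χ₁ * x χ₂ = x ⟨χ₁.1 + χ₂.1, embQ_add_mem_support hΛ h⟩)
    (hmul0 : ∀ χ₁ χ₂ : QLat Λ, (¬ ∃ c ∈ Λ, embQ χ₁.1 ∈ c ∧ embQ χ₂.1 ∈ c) →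
      x χ₁ * x χ₂ = 0) :
    Algebra.FiniteType k C ∧
    IsReduced C ∧
    (∀ χ : Fin n → ℤ, qfaComponent x χ ≠ ⊥ ↔ embQ χ ∈ ⋃₀ Λ) ∧
    (∀ χ : Fin n → ℤ, Module.finrank k (qfaComponent x χ) ≤ 1) ∧
    (∀ (χ : Fin n → ℤ) (m : ℕ), 0 < m → qfaComponent x (m • χ) ≠ ⊥ →
      qfaComponent x χ ≠ ⊥) := by
  refine ⟨finiteType_of_cones_eq_coneGen x hΛ hmul hpoly, isReduced_of_isQuasifan x hΛ hmul hmul0,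
    qfaComponent_ne_bot_iff x, finrank_qfaComponent_le_one x, fun χ m hm h => ?_⟩
  rw [qfaComponent_ne_bot_iff] at h ⊢
  exact embQ_mem_sUnion_of_nsmul hΛ.2.1 hm h

/-- if every cone of the quasifan `Λ` is generated by finitely many lattice
points, then the quasifan algebra `k[Λ]` is a finitely generated `k`-algebra, it is reduced
and multiplicity-free, its weight set equals `|Λ| ∩ ℤⁿ`, and this weight set is saturated;
hence `Spec k[Λ]` is an affine stable toric variety. -/
theorem quasifan_algebra_is_astv {n : ℕ} (k : Type) [Field k]
    (Λ : Set (Set (Fin n → ℚ))) (hΛ : IsQuasifan Λ)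
    (hpoly : ∀ c ∈ Λ, ∃ S : Finset (Fin n → ℤ), c = coneGen (embQ '' (S : Set (Fin n → ℤ))))
    (C : Type) [CommRing C] [Algebra k C] (x : Module.Basis (QLat Λ) k C)
    (hmul : ∀ (χ₁ χ₂ : QLat Λ) (h : ∃ c ∈ Λ, embQ χ₁.1 ∈ c ∧ embQ χ₂.1 ∈ c),
      x χ₁ * x χ₂ = x ⟨χ₁.1 + χ₂.1, embQ_add_mem_support hΛ h⟩)
    (hmul0 : ∀ χ₁ χ₂ : QLat Λ, (¬ ∃ c ∈ Λ, embQ χ₁.1 ∈ c ∧ embQ χ₂.1 ∈ c) →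
      x χ₁ * x χ₂ = 0)
    (hone : ∀ h0 : embQ (0 : Fin n → ℤ) ∈ ⋃₀ Λ, x ⟨0, h0⟩ = 1) :
    Algebra.FiniteType k C ∧
    IsReduced C ∧
    (∀ χ : Fin n → ℤ, qfaComponent x χ ≠ ⊥ ↔ embQ χ ∈ ⋃₀ Λ) ∧
    (∀ χ : Fin n → ℤ, Module.finrank k (qfaComponent x χ) ≤ 1) ∧
    (∀ (χ : Fin n → ℤ) (m : ℕ), 0 < m → qfaComponent x (m • χ) ≠ ⊥ →
      qfaComponent x χ ≠ ⊥) :=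
  quasifan_algebra_is_astv_general k Λ hΛ hpoly C x hmul hmul0
end
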